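/- arXiv:1810.09633 — 3 statements merged into one kernel-verified Lean document; each statement's English description precedes it below -/
import Mathlib

section
/- The constructed Moore machine M_{A,N} is a filter for A with buffer size N: for any word w = a1...an ∈ Σ*, the output of M_{A,N} on the input w⊥^N is of the form ⊥^N w' where w' = b1...bn and each bi ∈ {ai, ⊥}. -/
attribute [local instance] Classical.propDecidable

/-- A nondeterministic finite automaton with a single initial state. -/
structure NFA' (α : Type) (σ : Type) where
  start : σ
  accept : Set σ
  step : σ → α → σ → Prop

namespace NFA'
variable {α σ : Type}

def stepSet (A : NFA' α σ) (S : Set σ) (a : α) : Set σ := {s' | ∃ s ∈ S, A.step s a s'}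

/-- States reachable from a set of states by reading a word. -/
def evalFrom (A : NFA' α σ) (S : Set σ) (u : List α) : Set σ := u.foldl A.stepSet S

/-- States reachable from the initial state by reading a word. -/
def eval (A : NFA' α σ) (u : List α) : Set σ := A.evalFrom {A.start} u

/-- The NFA accepts the word `u`. -/
def accepts (A : NFA' α σ) (u : List α) : Prop := ∃ s ∈ A.eval u, s ∈ A.accept

end NFA'

/-- `sub w i j` is the subword `w[i..j]` (1-indexed, inclusive). -/
def sub {β : Type} (w : List β) (i j : ℕ) : List β := (w.drop (i - 1)).take (j - i + 1)

/-- A Moore machine. -/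
structure Moore (I O Q : Type) where
  init : Q
  trans : Q → I → Q
  out : Q → O

/-- The output word of a Moore machine over an input word:
`Λ(q₀) Λ(q₁) … Λ(q_{m-1})` where `q₀ q₁ … q_m` is the run. -/
def Moore.output {I O Q : Type} (M : Moore I O Q) (u : List I) : List O :=
  (List.range u.length).map fun k => M.out ((u.take k).foldl M.trans M.init)

/-- The input word `w` padded with `N` copies of `⊥` at the end. -/
def pad {α : Type} (w : List α) (N : ℕ) : List (Option α) :=
  w.map some ++ List.replicate N none

/-- One step of the deterministic "non-buffer part" (subset construction with
modular counters): `{(s', (n mod N)+1) | (s,n) ∈ S, (s,a,s') ∈ E} ∪ {(s₀,0)}`.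
There are no transitions on `⊥`. -/
def nbStep {α σ : Type} (A : NFA' α σ) (N : ℕ) (S : Set (σ × ℕ)) (a : Option α) :
    Set (σ × ℕ) :=
  insert (A.start, 0)
    {p | ∃ s n a', (s, n) ∈ S ∧ a = some a' ∧ A.step s a' p.1 ∧ p.2 = n % N + 1}

/-- `ψ(S) = max { n | (s,n) ∈ S, s ∈ S_F }`. -/
noncomputable def psi {α σ : Type} (A : NFA' α σ) (S : Set (σ × ℕ)) : ℕ :=
  sSup {n | ∃ s, s ∈ A.accept ∧ (s, n) ∈ S}

/-- The filter Moore machine `M_{A,N}`: subset construction with modular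
counters, together with a FIFO buffer of `N` characters labeled
`pass` (`true`) or `mask` (`false`). -/
noncomputable def filterMM {α σ : Type} (A : NFA' α σ) (N : ℕ) :
    Moore (Option α) (Option α) (Set (σ × ℕ) × List (Option α) × List Bool) where
  init := ({(A.start, 0)}, List.replicate N none, List.replicate N false)
  trans := fun q a =>
    let S' := nbStep A N q.1 a
    let lab := q.2.2
    let lab' : List Bool :=
      if ∃ s, (s, N) ∈ S' then List.replicate N true
      else if ∃ s n, s ∈ A.accept ∧ (s, n) ∈ S' then
        lab.tail.take (N - psi A S') ++ List.replicate (psi A S') true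
      else lab.tail ++ [false]
    (S', q.2.1.tail ++ [a], lab')
  out := fun q => if q.2.2.headI then q.2.1.headI else none

/-- `M` is a filter with buffer size `N` (Definition of filter). -/
def IsFilter {α Q : Type} (N : ℕ) (M : Moore (Option α) (Option α) Q) : Prop :=
  ∀ w : List α, ∃ w' : List (Option α),
    M.output (pad w N) = List.replicate N (none : Option α) ++ w' ∧
    w'.length = w.length ∧
    ∀ k, k < w.length → w'[k]? = some none ∨ w'[k]? = (w[k]?).map some

/-!
The labels never matter: the output of `M_{A,N}` is either `⊥` or the front of its FIFO buffer,
and after reading `v` the buffer holds the last `N` letters of `⊥^N v`. So the `k`-th output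
letter is `⊥` or the `k`-th letter of `⊥^N v`, which on the input `w ⊥^N` is `⊥` for `k < N`
and `w[k - N]` afterwards.
-/

namespace List
variable {β : Type}

theorem headI_drop [Inhabited β] (l : List β) (k : ℕ) : (l.drop k).headI = l.getI k := by
  induction l generalizing k with
  | nil => simp
  | cons x xs ih => cases k <;> simp [ih]

theorem getI_take [Inhabited β] (l : List β) {k n : ℕ} (h : k < n) :
    (l.take n).getI k = l.getI k := by
  simp only [← getD_default_eq_getI, getD_eq_getElem?_getD, getElem?_take_of_lt h]

theorem tail_drop_append_singleton (l : List β) (a : β) {k : ℕ} (h : k < l.length) :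
    (l.drop k).tail ++ [a] = (l ++ [a]).drop (k + 1) := by
  rw [tail_drop, drop_append_of_le_length h]

end List

namespace Moore
variable {I O Q : Type} (M : Moore I O Q)

@[simp]
theorem length_output (u : List I) : (M.output u).length = u.length := by
  simp [output]

theorem getElem_output (u : List I) (k : ℕ) (hk : k < (M.output u).length) :
    (M.output u)[k] = M.out ((u.take k).foldl M.trans M.init) := by
  simp [output]

end Moore

theorem getI_pad {α : Type} (w : List α) (N : ℕ) {k : ℕ} (hk : k < w.length) :
    (pad w N).getI k = some w[k] := by
  have hk' : k < (w.map some).length := by simpa using hk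
  rw [pad, List.getI_append _ _ _ hk', List.getI_eq_getElem _ hk', List.getElem_map]

-- `(⊥^N v).getI |v|` is the letter read `N` steps ago, and `⊥` while fewer than `N` have been read.
def Moore.IsMaskedDelay {α Q : Type} (N : ℕ) (M : Moore (Option α) (Option α) Q) : Prop :=
  ∀ v : List (Option α), M.out (v.foldl M.trans M.init) = none ∨
    M.out (v.foldl M.trans M.init) = (List.replicate N none ++ v).getI v.length

namespace Moore.IsMaskedDelay
variable {α Q : Type} {N : ℕ} {M : Moore (Option α) (Option α) Q}

theorem getElem_output (hM : M.IsMaskedDelay N) (hN : 1 ≤ N) (u : List (Option α)) (k : ℕ)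
    (hk : k < (M.output u).length) :
    (M.output u)[k] = none ∨ (M.output u)[k] = (List.replicate N none ++ u).getI k := by
  have hku : k < u.length := by simpa using hk
  -- `N ≥ 1`: the letter read `N` steps before position `k` lies in the prefix `u.take k`.
  have hprefix : (List.replicate N none ++ u.take k).getI k
      = (List.replicate N none ++ u).getI k := by
    rw [← List.length_replicate (n := N) (a := (none : Option α)), ← List.take_length_add_append,
      List.getI_take _ (by simp; omega)]
  rw [M.getElem_output, ← hprefix]
  simpa [hku.le] using hM (u.take k)

theorem isFilter (hM : M.IsMaskedDelay N) (hN : 1 ≤ N) : IsFilter N M := by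
  intro w
  set u := pad w N
  have hlen : (M.output u).length = N + w.length := by simp [u, pad, add_comm]
  refine ⟨(M.output u).drop N, ?_, by simp [hlen], fun k hk => ?_⟩
  · conv_lhs => rw [← List.take_append_drop N (M.output u)]
    congr 1
    refine List.eq_replicate_iff.2 ⟨by simp [hlen], fun b hb => ?_⟩
    obtain ⟨i, hi, rfl⟩ := List.getElem_of_mem hb
    have hiN : i < N := by simp at hi; omega
    have hbuf : (List.replicate N none ++ u).getI i = none := by
      rw [List.getI_append _ _ _ (by simpa), List.getI_eq_getElem _ (by simpa), List.getElem_replicate]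
    rw [List.getElem_take]
    exact (hM.getElem_output hN u i (by omega)).elim id (·.trans hbuf)
  · rw [List.getElem?_drop, List.getElem?_eq_getElem (by omega), List.getElem?_eq_getElem hk]
    have hdelay : (List.replicate N none ++ u).getI (N + k) = some w[k] := by
      rw [List.getI_append_right _ _ _ (by simp), List.length_replicate, Nat.add_sub_cancel_left,
        getI_pad w N hk]
    rcases hM.getElem_output hN u (N + k) (by omega) with h | h
    · exact .inl (by rw [h])
    · exact .inr (by rw [h, hdelay]; rfl)

end Moore.IsMaskedDelay

theorem filterMM_buffer {α σ : Type} (A : NFA' α σ) {N : ℕ} (hN : 1 ≤ N)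
    (v : List (Option α)) :
    (v.foldl (filterMM A N).trans (filterMM A N).init).2.1
      = (List.replicate N none ++ v).drop v.length := by
  induction v using List.reverseRecOn with
  | nil => simp [filterMM]
  | append_singleton v a ih =>
    rw [List.foldl_append, List.foldl_cons, List.foldl_nil]
    show (v.foldl (filterMM A N).trans (filterMM A N).init).2.1.tail ++ [a] = _
    rw [ih, List.tail_drop_append_singleton _ _ (by simp; omega), List.append_assoc,
      List.length_append, List.length_singleton]

theorem filterMM_isMaskedDelay {α σ : Type} (A : NFA' α σ) {N : ℕ} (hN : 1 ≤ N) :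
    (filterMM A N).IsMaskedDelay N := by
  intro v
  show ite _ _ _ = _ ∨ ite _ _ _ = _
  rw [filterMM_buffer A hN, List.headI_drop]
  split <;> simp

/-- the constructed Moore machine `M_{A,N}` is a filter for `A`
with buffer size `N`. -/
theorem filterMM_isFilter {α σ : Type} (A : NFA' α σ) (N : ℕ) (hN : 1 ≤ N) :
    IsFilter N (filterMM A N) :=
  (filterMM_isMaskedDelay A hN).isFilter hN
end

section
/- If the NFA A has a transition out of every state leading eventually to an accepting state, and w[i..j] ∈ L(A) with j − i + 1 ≤ N, then in the run of the non-buffer part of M_{A,N} over w, at step j the subset 𝒮_j contains a pair (s, ((j−i) mod N)+1) with s ∈ SF. -/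
attribute [local instance] Classical.propDecidable

namespace NFA'

variable {α σ : Type}

lemma mem_nbStep_some (A : NFA' α σ) (N : ℕ) {S : Set (σ × ℕ)} {s s' : σ} {n : ℕ} {a : α}
    (hs : (s, n) ∈ S) (hstep : A.step s a s') : (s', n % N + 1) ∈ nbStep A N S (some a) :=
  Set.mem_insert_of_mem _ ⟨s, n, a, hs, rfl, hstep, rfl⟩

lemma start_mem_foldl_nbStep (A : NFA' α σ) (N : ℕ) (u : List (Option α)) {S : Set (σ × ℕ)}
    (hS : (A.start, 0) ∈ S) : (A.start, 0) ∈ u.foldl (nbStep A N) S := by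
  induction u generalizing S with
  | nil => exact hS
  | cons _ _ ih => exact ih (Set.mem_insert _ _)

/-- As long as the counter does not wrap around, the non-buffer part of `M_{A,N}` runs the
subset construction of `A` on each layer of states sharing a counter value. -/
lemma mem_foldl_nbStep_of_mem_evalFrom (A : NFA' α σ) (N : ℕ) (u : List α) {T : Set σ}
    {S : Set (σ × ℕ)} {n : ℕ} (hTS : ∀ s ∈ T, (s, n) ∈ S) (hlen : n + u.length ≤ N)
    {s' : σ} (hs' : s' ∈ A.evalFrom T u) :
    (s', n + u.length) ∈ (u.map some).foldl (nbStep A N) S := by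
  induction u generalizing T S n with
  | nil => exact hTS s' hs'
  | cons a v ih =>
    have hn : n % N = n := Nat.mod_eq_of_lt (by simp at hlen; omega)
    have hstep : ∀ t ∈ A.stepSet T a, (t, n + 1) ∈ nbStep A N S (some a) := by
      rintro t ⟨s, hsT, hst⟩
      simpa only [hn] using mem_nbStep_some A N (hTS s hsT) hst
    have := ih hstep (by simp at hlen; omega) hs'
    rwa [List.length_cons, ← Nat.add_comm 1, ← Nat.add_assoc]

end NFA'

lemma take_eq_take_append_sub {β : Type} (w : List β) {i j : ℕ} (hi : 1 ≤ i) (hij : i ≤ j) :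
    w.take j = w.take (i - 1) ++ sub w i j := by
  rw [sub, ← List.take_add, show i - 1 + (j - i + 1) = j by omega]

lemma length_sub {β : Type} (w : List β) {i j : ℕ} (hi : 1 ≤ i) (hij : i ≤ j)
    (hj : j ≤ w.length) :
    (sub w i j).length = j - i + 1 := by
  simp only [sub, List.length_take, List.length_drop]
  omega

theorem accepting_pair_in_subset_general {α σ : Type} (A : NFA' α σ) (N : ℕ)
    (w : List α) (i j : ℕ) (hi : 1 ≤ i) (hij : i ≤ j) (hj : j ≤ w.length)
    (hacc : A.accepts (sub w i j)) (hlen : j - i + 1 ≤ N) :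
    ∃ s ∈ A.accept,
      (s, (j - i) % N + 1) ∈ ((w.take j).map some).foldl (nbStep A N) {(A.start, 0)} := by
  obtain ⟨s, hs_eval, hs_acc⟩ := hacc
  refine ⟨s, hs_acc, ?_⟩
  have hstart := A.start_mem_foldl_nbStep N ((w.take (i - 1)).map some) (Set.mem_singleton _)
  have hrun := A.mem_foldl_nbStep_of_mem_evalFrom N (sub w i j)
    (by rintro _ rfl; exact hstart) (by rw [length_sub w hi hij hj]; omega) hs_eval
  rw [take_eq_take_append_sub w hi hij, List.map_append, List.foldl_append]
  rwa [Nat.mod_eq_of_lt (by omega), ← length_sub w hi hij hj, ← Nat.zero_add (sub w i j).length]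

/-- if `w[i..j] ∈ L(A)` (1-indexed) with `j - i + 1 ≤ N`, then in
the run of the non-buffer part of `M_{A,N}` over `w`, the subset `𝒮_j` contains
a pair `(s, ((j-i) mod N) + 1)` with `s` accepting. -/
theorem accepting_pair_in_subset {α σ : Type} (A : NFA' α σ) (N : ℕ) (hN : 1 ≤ N)
    (w : List α) (i j : ℕ) (hi : 1 ≤ i) (hij : i ≤ j) (hj : j ≤ w.length)
    (hacc : A.accepts (sub w i j)) (hlen : j - i + 1 ≤ N) :
    ∃ s ∈ A.accept,
      (s, (j - i) % N + 1) ∈ ((w.take j).map some).foldl (nbStep A N) {(A.start, 0)} :=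
  accepting_pair_in_subset_general A N w i j hi hij hj hacc hlen
end

section
/- A real-time automaton (a timed automaton with a single clock y that is reset on every transition and whose guards are finite unions of intervals of y with integer or infinite endpoints) can be determinized: for every RTA B there is a deterministic RTA B^d with L(B^d) = L(B), obtained by the subset construction where, for each subset 𝒮 and character a, one refines ℝ≥0 into the coarsest partition 𝕀_{𝒮,a} compatible with all guards of a-transitions out of states in 𝒮, and adds transitions (𝒮, a, y∈I', {y}, 𝒮') with 𝒮' = {s' | ∃s ∈ 𝒮, (s,a,y∈I'',{y},s') with I' ⊆ I''}. -/
attribute [local instance] Classical.propDecidable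

/-- A timed automaton: `trans s a g λ s'` means there is a transition from `s`
to `s'` on character `a` with guard `g` (a predicate on clock valuations) and
reset set `λ`. -/
structure TA (α : Type) (σ : Type) (C : Type) where
  start : σ
  accept : Set σ
  trans : σ → α → ((C → ℝ) → Prop) → Set C → σ → Prop

namespace TA
variable {α σ C : Type}

/-- One step of a timed automaton: from configuration `c` at previous absolute
time `t`, reading the time-stamped character `p = (a,τ)` (so the dwell time is
`τ - t`), reaching configuration `c'`. -/
def step (A : TA α σ C) (t : ℝ) (c : σ × (C → ℝ)) (p : α × ℝ) (c' : σ × (C → ℝ)) : Prop :=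
  ∃ g l, A.trans c.1 p.1 g l c'.1 ∧ g (fun x => c.2 x + (p.2 - t)) ∧
    ∀ x, c'.2 x = if x ∈ l then 0 else c.2 x + (p.2 - t)

/-- `PathFrom t c w c'`: reading the timed word `w` from configuration `c`
(the previous timestamp being `t`) ends in configuration `c'`. -/
def PathFrom (A : TA α σ C) : ℝ → σ × (C → ℝ) → List (α × ℝ) → σ × (C → ℝ) → Prop
  | _, c, [], c' => c' = c
  | t, c, p :: w, c' => ∃ c₁, A.step t c p c₁ ∧ A.PathFrom p.2 c₁ w c'

/-- `RunFrom t c w cs`: `cs` is the full list of configurations visited when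
reading `w` from configuration `c` (so `cs` starts with `c` and has length `|w|+1`). -/
def RunFrom (A : TA α σ C) : ℝ → σ × (C → ℝ) → List (α × ℝ) → List (σ × (C → ℝ)) → Prop
  | _, c, [], cs => cs = [c]
  | t, c, p :: w, cs => ∃ c₁ cs', cs = c :: cs' ∧ A.step t c p c₁ ∧ A.RunFrom p.2 c₁ w cs'

end TA

/-- A timed word: positive, strictly increasing timestamps. -/
def IsTimedWord {α : Type} (w : List (α × ℝ)) : Prop :=
  (∀ p ∈ w, 0 < p.2) ∧ w.Chain' fun p q => p.2 < q.2

/-- The language of a timed automaton. -/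
def TA.lang {α σ C : Type} (A : TA α σ C) : Set (List (α × ℝ)) :=
  {w | IsTimedWord w ∧ ∃ c, A.PathFrom 0 (A.start, fun _ => 0) w c ∧ c.1 ∈ A.accept}

/-- An interval of `ℝ` with integer or infinite endpoints. -/
def IsIntInterval (I : Set ℝ) : Prop :=
  (∃ a b : ℤ, I = Set.Icc (a : ℝ) b ∨ I = Set.Ico (a : ℝ) b ∨
    I = Set.Ioc (a : ℝ) b ∨ I = Set.Ioo (a : ℝ) b) ∨
  (∃ a : ℤ, I = Set.Ici (a : ℝ) ∨ I = Set.Ioi (a : ℝ) ∨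
    I = Set.Iic (a : ℝ) ∨ I = Set.Iio (a : ℝ)) ∨
  I = Set.univ ∨ I = ∅

/-- A real-time automaton: a timed automaton with a single clock `y` that is
reset on every transition, whose guards are finite unions of intervals of `y`
with integer or infinite endpoints. -/
def IsRTA {α σ : Type} (B : TA α σ Unit) : Prop :=
  ∀ s a g l s', B.trans s a g l s' →
    l = Set.univ ∧ ∃ (n : ℕ) (f : Fin n → Set ℝ),
      (∀ i, IsIntInterval (f i)) ∧ ∀ ν : Unit → ℝ, g ν ↔ ν () ∈ ⋃ i, f i

/-- Determinism: for each configuration, character and dwell time there is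
exactly one successor configuration. -/
def IsDeterministicTA {α σ C : Type} (B : TA α σ C) : Prop :=
  ∀ (t : ℝ) (c : σ × (C → ℝ)) (p : α × ℝ), ∃! c', B.step t c p c'

/-!
Two dwell times with the same floor and the same ceiling lie in exactly the same intervals with
integer endpoints, so a transition of a real-time automaton is enabled either at all of them or at
none. The classes of this equivalence (the integers and the open unit intervals between them) are
themselves integer intervals, and they partition `ℝ`. The subset construction whose transitions
are guarded by these classes is therefore a deterministic real-time automaton; after reading a
timed word it sits in the set of states that `B` can reach on that word, so it accepts the same
language.
-/

theorem IsIntInterval.mem_iff_of_floor_eq_of_ceil_eq {I : Set ℝ} (hI : IsIntInterval I)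
    {x y : ℝ} (hfloor : ⌊x⌋ = ⌊y⌋) (hceil : ⌈x⌉ = ⌈y⌉) : x ∈ I ↔ y ∈ I := by
  rcases hI with ⟨a, b, rfl | rfl | rfl | rfl⟩ | ⟨a, rfl | rfl | rfl | rfl⟩ | rfl | rfl <;>
    simp only [Set.mem_Icc, Set.mem_Ico, Set.mem_Ioc, Set.mem_Ioo, Set.mem_Ici, Set.mem_Ioi,
      Set.mem_Iic, Set.mem_Iio, Set.mem_univ, Set.mem_empty_iff_false, ← Int.le_floor,
      ← Int.lt_ceil, ← Int.ceil_le, ← Int.floor_lt, hfloor, hceil]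

def clockRegion (y : ℝ) : Set ℝ := {z | ⌊z⌋ = ⌊y⌋ ∧ ⌈z⌉ = ⌈y⌉}

theorem mem_clockRegion_self (y : ℝ) : y ∈ clockRegion y := ⟨rfl, rfl⟩

theorem isIntInterval_clockRegion (y : ℝ) : IsIntInterval (clockRegion y) := by
  obtain hint | hfrac : ⌈y⌉ = ⌊y⌋ ∨ ⌈y⌉ = ⌊y⌋ + 1 := by
    have := Int.floor_le_ceil y
    have := Int.ceil_le_floor_add_one y
    omega
  · refine Or.inl ⟨⌊y⌋, ⌊y⌋, Or.inl (Set.ext fun z => ?_)⟩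
    change ⌊z⌋ = ⌊y⌋ ∧ ⌈z⌉ = ⌈y⌉ ↔ _
    rw [hint, Int.floor_eq_iff, Int.ceil_eq_iff, Set.mem_Icc]
    constructor
    · rintro ⟨⟨h₁, -⟩, -, h₂⟩
      exact ⟨h₁, h₂⟩
    · rintro ⟨h₁, h₂⟩
      exact ⟨⟨h₁, by linarith⟩, by linarith, h₂⟩
  · refine Or.inl ⟨⌊y⌋, ⌊y⌋ + 1, Or.inr (Or.inr (Or.inr (Set.ext fun z => ?_)))⟩
    change ⌊z⌋ = ⌊y⌋ ∧ ⌈z⌉ = ⌈y⌉ ↔ _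
    rw [hfrac, Int.floor_eq_iff, Int.ceil_eq_iff, Set.mem_Ioo]
    push_cast
    constructor
    · rintro ⟨⟨-, h₂⟩, h₁, -⟩
      exact ⟨by linarith, h₂⟩
    · rintro ⟨h₁, h₂⟩
      exact ⟨⟨h₁.le, h₂⟩, by linarith, h₂.le⟩

namespace TA

variable {α σ : Type}

def succSet (B : TA α σ Unit) (S : Set σ) (a : α) (d : ℝ) : Set σ :=
  {s' | ∃ s ∈ S, ∃ g l, B.trans s a g l s' ∧ g fun _ => d}

/-- The subset construction. Its guards are the clock regions instead of the paper's coarsest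
partition `𝕀_{𝒮,a}`; any partition into integer intervals refining all guards would do. -/
def determinize (B : TA α σ Unit) : TA α (Set σ) Unit where
  start := {B.start}
  accept := {S | ∃ s ∈ S, s ∈ B.accept}
  trans S a g l T :=
    ∃ d, (g = fun ν => ν () ∈ clockRegion d) ∧ l = Set.univ ∧ T = B.succSet S a d

def reachSet (B : TA α σ Unit) : ℝ → Set σ → List (α × ℝ) → Set σ
  | _, S, [] => S
  | t, S, p :: w => B.reachSet p.2 (B.succSet S p.1 (p.2 - t)) w

theorem isRTA_determinize (B : TA α σ Unit) : IsRTA B.determinize := by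
  rintro S a g l T ⟨d, rfl, rfl, -⟩
  exact ⟨rfl, 1, fun _ => clockRegion d, fun _ => isIntInterval_clockRegion d,
    fun ν => by rw [Set.iUnion_const]⟩

end TA

namespace IsRTA

variable {α σ : Type} {B : TA α σ Unit}

theorem guard_iff_of_mem_clockRegion (hB : IsRTA B) {s s' : σ} {a : α} {g : (Unit → ℝ) → Prop}
    {l : Set Unit} (htrans : B.trans s a g l s') {y z : ℝ} (hz : z ∈ clockRegion y) :
    g (fun _ => z) ↔ g (fun _ => y) := by
  obtain ⟨-, n, I, hI, hg⟩ := hB s a g l s' htrans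
  simp only [hg, Set.mem_iUnion]
  exact exists_congr fun i => (hI i).mem_iff_of_floor_eq_of_ceil_eq hz.1 hz.2

theorem succSet_eq_of_mem_clockRegion (hB : IsRTA B) (S : Set σ) (a : α) {y z : ℝ}
    (hz : z ∈ clockRegion y) : B.succSet S a z = B.succSet S a y := by
  ext s'
  refine exists_congr fun s => and_congr_right fun _ => exists₂_congr fun g l =>
    and_congr_right fun htrans => ?_
  exact hB.guard_iff_of_mem_clockRegion htrans hz

theorem step_iff (hB : IsRTA B) (t : ℝ) (s : σ) (v : Unit → ℝ) (p : α × ℝ) (s' : σ)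
    (u : Unit → ℝ) :
    B.step t (s, v) p (s', u) ↔ s' ∈ B.succSet {s} p.1 (v () + (p.2 - t)) ∧ u = fun _ => 0 := by
  constructor
  · rintro ⟨g, l, htrans, hg, hu⟩
    obtain rfl := (hB _ _ _ _ _ htrans).1
    exact ⟨⟨s, rfl, g, Set.univ, htrans, hg⟩, funext fun x => by simpa using hu x⟩
  · rintro ⟨⟨_, rfl, g, l, htrans, hg⟩, rfl⟩
    exact ⟨g, l, htrans, hg, fun x => by simp [(hB _ _ _ _ _ htrans).1]⟩

theorem determinize_step_iff (hB : IsRTA B) (t : ℝ) (c : Set σ × (Unit → ℝ)) (p : α × ℝ)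
    (c' : Set σ × (Unit → ℝ)) :
    B.determinize.step t c p c' ↔ c' = (B.succSet c.1 p.1 (c.2 () + (p.2 - t)), fun _ => 0) := by
  constructor
  · rintro ⟨g, l, ⟨d, rfl, rfl, hT⟩, hg, hu⟩
    exact Prod.ext (hT.trans (hB.succSet_eq_of_mem_clockRegion _ _ hg).symm)
      (funext fun x => by simpa using hu x)
  · rintro rfl
    exact ⟨_, _, ⟨_, rfl, rfl, rfl⟩, mem_clockRegion_self _, fun x => by simp⟩

theorem isDeterministicTA_determinize (hB : IsRTA B) : IsDeterministicTA B.determinize :=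
  fun t c p => ⟨_, (hB.determinize_step_iff t c p _).mpr rfl,
    fun c' hc' => (hB.determinize_step_iff t c p c').mp hc'⟩

theorem determinize_pathFrom_iff (hB : IsRTA B) (w : List (α × ℝ)) (t : ℝ) (S : Set σ)
    (c : Set σ × (Unit → ℝ)) :
    B.determinize.PathFrom t (S, fun _ => 0) w c ↔ c = (B.reachSet t S w, fun _ => 0) := by
  induction w generalizing t S with
  | nil => exact Iff.rfl
  | cons p w ih =>
    simp only [TA.PathFrom, hB.determinize_step_iff, exists_eq_left, zero_add]
    exact ih _ _

theorem mem_reachSet_iff (hB : IsRTA B) (w : List (α × ℝ)) (t : ℝ) (S : Set σ) (s' : σ) :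
    s' ∈ B.reachSet t S w ↔ ∃ s ∈ S, ∃ u, B.PathFrom t (s, fun _ => 0) w (s', u) := by
  induction w generalizing t S with
  | nil => simp [TA.PathFrom, TA.reachSet]
  | cons p w ih =>
    rw [TA.reachSet, ih]
    constructor
    · rintro ⟨s₁, ⟨s, hs, g, l, htrans, hg⟩, u, hpath⟩
      refine ⟨s, hs, u, (s₁, fun _ => 0), (hB.step_iff ..).mpr ⟨?_, rfl⟩, hpath⟩
      exact ⟨s, rfl, g, l, htrans, by simpa using hg⟩
    · rintro ⟨s, hs, u, ⟨s₁, v⟩, hstep, hpath⟩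
      obtain ⟨⟨s₀, rfl, g, l, htrans, hg⟩, rfl⟩ := (hB.step_iff ..).mp hstep
      exact ⟨s₁, ⟨s₀, hs, g, l, htrans, by simpa using hg⟩, u, hpath⟩

theorem lang_determinize (hB : IsRTA B) : B.determinize.lang = B.lang := by
  refine Set.ext fun w => and_congr_right fun _ => ?_
  simp only [hB.determinize_pathFrom_iff, exists_eq_left]
  constructor
  · rintro ⟨s, hs, hacc⟩
    obtain ⟨_, rfl, u, hpath⟩ := (hB.mem_reachSet_iff ..).mp hs
    exact ⟨(s, u), hpath, hacc⟩
  · rintro ⟨⟨s, u⟩, hpath, hacc⟩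
    exact ⟨s, (hB.mem_reachSet_iff ..).mpr ⟨_, rfl, u, hpath⟩, hacc⟩

end IsRTA

/-- every real-time automaton can be determinized (by the subset
construction refining guards): there is a deterministic RTA on the powerset of
the states with the same language. -/
theorem rta_determinization {α σ : Type} (B : TA α σ Unit) (hB : IsRTA B) :
    ∃ B' : TA α (Set σ) Unit,
      IsRTA B' ∧ IsDeterministicTA B' ∧ B'.lang = B.lang :=
  ⟨B.determinize, B.isRTA_determinize, hB.isDeterministicTA_determinize, hB.lang_determinize⟩
end
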